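/- arXiv:2110.05686 — 2 statements merged into one kernel-verified Lean document; each statement's English description precedes it below -/
import Mathlib

section
/- Any nonnegative power vector p satisfying SINR_k(p) ≥ r_k for all k ∈ {1,…,K} satisfies p_k ≥ p^min_k componentwise, where p^min is the recursively defined minimal power vector; consequently p^min uniquely minimizes the total power ∑_k p_k subject to the SINR constraints. -/
/-!
Since user `k` is only interfered with by users `j > k`, the SINR constraints are triangular and
can be solved from the last user backwards. By downward induction on `k`, `pmin j ≤ p j` for all
`j > k` gives `I_k(pmin) ≤ I_k(p)`, so feasibility of `p` at `k` yields
`pmin k = r k (I_k(pmin) + σ²) / H k k ≤ r k (I_k(p) + σ²) / H k k ≤ p k`.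
Summing gives minimality, and equality of the sums forces equality everywhere.
-/

open Finset

section Interference

variable {ι : Type*} [LinearOrder ι] [LocallyFiniteOrderTop ι]

def interference (H : ι → ι → ℝ) (p : ι → ℝ) (k : ι) : ℝ :=
  ∑ j ∈ Ioi k, p j * H j k

lemma interference_nonneg {H : ι → ι → ℝ} {p : ι → ℝ} {k : ι} (hH : ∀ j, 0 ≤ H j k)
    (hp : ∀ j, 0 ≤ p j) : 0 ≤ interference H p k :=
  sum_nonneg fun j _ => mul_nonneg (hp j) (hH j)

lemma interference_mono {H : ι → ι → ℝ} {p q : ι → ℝ} {k : ι} (hH : ∀ j, 0 ≤ H j k)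
    (hpq : ∀ j, k < j → p j ≤ q j) : interference H p k ≤ interference H q k :=
  sum_le_sum fun j hj => mul_le_mul_of_nonneg_right (hpq j (mem_Ioi.mp hj)) (hH j)

theorem le_of_sinr_feasible [WellFoundedGT ι] {σ2 : ℝ} (hσ : 0 < σ2) {H : ι → ι → ℝ}
    (hH : ∀ j k, 0 < H j k) {r : ι → ℝ} (hr : ∀ k, 0 ≤ r k) {pmin p : ι → ℝ}
    (hrec : ∀ k, pmin k = r k * (interference H pmin k + σ2) / H k k) (hp : ∀ k, 0 ≤ p k)
    (hfeas : ∀ k, r k ≤ p k * H k k / (interference H p k + σ2)) (k : ι) :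
    pmin k ≤ p k := by
  induction k using WellFoundedGT.induction with
  | _ k ih =>
    have hD : 0 < interference H p k + σ2 := by
      linarith [interference_nonneg (fun j => (hH j k).le) hp]
    rw [hrec k, div_le_iff₀ (hH k k)]
    calc r k * (interference H pmin k + σ2)
        ≤ r k * (interference H p k + σ2) := by
          gcongr
          · exact hr k
          · exact interference_mono (fun j => (hH j k).le) ih
      _ ≤ p k * H k k := (le_div_iff₀ hD).mp (hfeas k)

end Interference

/-- Any nonnegative feasible power vector dominates the recursively defined minimal one
componentwise; consequently `p^min` uniquely minimizes the total power. -/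
theorem stmt_5 {K : ℕ} (σ2 : ℝ) (hσ : 0 < σ2) (H : Fin K → Fin K → ℝ)
    (hH : ∀ j k, 0 < H j k) (r : Fin K → ℝ) (hr : ∀ k, 0 < r k)
    (pmin : Fin K → ℝ)
    (hrec : ∀ k, pmin k = r k * ((∑ j ∈ Finset.Ioi k, pmin j * H j k) + σ2) / H k k)
    (p : Fin K → ℝ) (hp : ∀ k, 0 ≤ p k)
    (hfeas : ∀ k, r k ≤ p k * H k k / ((∑ j ∈ Finset.Ioi k, p j * H j k) + σ2)) :
    (∀ k, pmin k ≤ p k) ∧ ((∑ k, pmin k) ≤ ∑ k, p k) ∧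
      ((∑ k, p k) = (∑ k, pmin k) → p = pmin) := by
  have hle : pmin ≤ p :=
    le_of_sinr_feasible hσ hH (fun k => (hr k).le) hrec hp hfeas
  refine ⟨hle, Fintype.sum_mono hle, fun hsum => ?_⟩
  by_contra hne
  exact (Fintype.sum_strictMono (lt_of_le_of_ne hle (Ne.symm hne))).ne hsum.symm
end

section
/- For a Hermitian PSD matrix V with unit diagonal ([V]_{m,m}=1 for all m), the penalty ‖V‖_* − ‖V‖_2 = M − λ_max(V) is nonnegative, and equals zero if and only if rank(V) = 1. -/
/-!
The eigenvalues of `V` are nonnegative, so `‖V‖_*` is their sum, the trace of `V`, which is `M`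
because the diagonal is `1`. The largest eigenvalue is one term of that sum, and it is the whole
sum exactly when every other eigenvalue vanishes, i.e. when exactly one eigenvalue is nonzero
(at least one is, since the sum is `M > 0`); that count is the rank of `V`.
-/

open Matrix ComplexOrder Finset

theorem Real.iSup_le_sum_of_nonneg {ι : Type*} [Fintype ι] {f : ι → ℝ} (hf : 0 ≤ f) :
    ⨆ i, f i ≤ ∑ i, f i :=
  Real.iSup_le (fun i => single_le_sum (fun j _ => hf j) (mem_univ i))
    (sum_nonneg fun j _ => hf j)

theorem Real.sum_eq_iSup_iff_card_ne_zero_le_one {ι : Type*} [Fintype ι] [Nonempty ι]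
    [DecidableEq ι] {f : ι → ℝ} (hf : 0 ≤ f) :
    ∑ i, f i = ⨆ i, f i ↔ #{i | f i ≠ 0} ≤ 1 := by
  obtain ⟨i₀, hi₀⟩ := exists_eq_ciSup_of_finite (f := f)
  have hmax : ∀ j, f j ≤ f i₀ := fun j => hi₀ ▸ le_ciSup (Set.finite_range f).bddAbove j
  rw [← hi₀, ← add_sum_erase univ f (mem_univ i₀), add_eq_left,
    sum_eq_zero_iff_of_nonneg fun j _ => hf j, card_le_one]
  simp only [mem_erase, mem_univ, and_true, mem_filter, true_and]
  constructor
  · intro hzero a ha b hb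
    have heq : ∀ j, f j ≠ 0 → j = i₀ := fun j hj => by_contra fun h => hj (hzero j h)
    rw [heq a ha, heq b hb]
  · intro hcard j hj
    by_contra hfj
    have hfi₀ : f i₀ ≠ 0 := (lt_of_lt_of_le ((hf j).lt_of_ne (Ne.symm hfj)) (hmax j)).ne'
    exact hj (hcard j hfj i₀ hfi₀)

theorem Matrix.IsHermitian.sum_eigenvalues_eq_card {𝕜 n : Type*} [RCLike 𝕜] [Fintype n]
    [DecidableEq n] {A : Matrix n n 𝕜} (hA : A.IsHermitian) (hdiag : ∀ i, A i i = 1) :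
    ∑ i, hA.eigenvalues i = Fintype.card n := by
  have htrace := hA.trace_eq_sum_eigenvalues
  simp only [trace, diag, hdiag, sum_const, card_univ, nsmul_eq_mul, mul_one] at htrace
  exact_mod_cast htrace.symm

/-- For a Hermitian PSD matrix with unit diagonal, the penalty
`‖V‖_* − ‖V‖₂ = M − λ_max(V)` is nonnegative, and vanishes iff `rank V = 1`. -/
theorem stmt_14 {M : ℕ} [NeZero M] (V : Matrix (Fin M) (Fin M) ℂ)
    (hV : V.PosSemidef) (hdiag : ∀ m, V m m = 1) :
    ((∑ i, |hV.isHermitian.eigenvalues i|) - (⨆ i, hV.isHermitian.eigenvalues i)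
        = (M : ℝ) - ⨆ i, hV.isHermitian.eigenvalues i) ∧
    (0 ≤ (∑ i, |hV.isHermitian.eigenvalues i|) - ⨆ i, hV.isHermitian.eigenvalues i) ∧
    ((∑ i, |hV.isHermitian.eigenvalues i|) - (⨆ i, hV.isHermitian.eigenvalues i) = 0
      ↔ V.rank = 1) := by
  set μ := hV.isHermitian.eigenvalues
  have hμ : 0 ≤ μ := hV.eigenvalues_nonneg
  have hsum : ∑ i, μ i = M := by
    simpa using hV.isHermitian.sum_eigenvalues_eq_card hdiag
  have hrank : V.rank = #{i | μ i ≠ 0} := by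
    rw [hV.isHermitian.rank_eq_card_non_zero_eigs, Fintype.card_subtype]
  have hrank_ne_zero : #{i | μ i ≠ 0} ≠ 0 := by
    rw [Ne, card_eq_zero, filter_eq_empty_iff]
    intro hzero
    have hM : (M : ℝ) = 0 := hsum ▸ sum_eq_zero fun i _ => not_not.1 (hzero (mem_univ i))
    exact NeZero.ne M (by exact_mod_cast hM)
  simp_rw [abs_of_nonneg (hμ _)]
  refine ⟨by rw [hsum], sub_nonneg.2 (Real.iSup_le_sum_of_nonneg hμ), ?_⟩
  rw [sub_eq_zero, Real.sum_eq_iSup_iff_card_ne_zero_le_one hμ, hrank]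
  omega
end
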